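/- With G = S6 ⋉ Z^5 as above and N the normal closure of P = u_{1,2}u_{2,3}^2u_{3,4}u_{5,6}^{-1}, for every k with 0 ≤ k ≤ 4 the element u_{5-k,6-k}^2 lies in N; consequently u_{i,i+1}^2 ∈ N for all 1 ≤ i ≤ 5. -/

import Mathlib

open Equiv SemidirectProduct

/-- The sum-of-coordinates homomorphism on `ℤ^6`. -/
def sumHom : (Fin 6 → ℤ) →+ ℤ :=
  ∑ i : Fin 6, Pi.evalAddMonoidHom (fun _ : Fin 6 => ℤ) i

/-- The rank-5 lattice `A` of integer vectors with coordinate sum zero, realizing the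
abelian group generated by the `u_{i,j}` with `u_{i,i} = e`, `u_{i,j}u_{j,i} = e`,
`u_{i,k}u_{k,j} = u_{i,j}` (i.e. `A_{1,6} ≅ ℤ^5`), via `u_{i,j} = e_i - e_j`. -/
def A : AddSubgroup (Fin 6 → ℤ) := sumHom.ker

lemma mem_A {v : Fin 6 → ℤ} : v ∈ A ↔ ∑ i, v i = 0 := by
  simp [A, sumHom, AddMonoidHom.mem_ker]

/-- Permutation of coordinates, as an additive automorphism of `ℤ^6`. -/
def pact (σ : Perm (Fin 6)) : (Fin 6 → ℤ) ≃+ (Fin 6 → ℤ) where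
  toFun v := v ∘ σ.symm
  invFun v := v ∘ σ
  left_inv v := by ext i; simp
  right_inv v := by ext i; simp
  map_add' v w := rfl

lemma pact_mem (σ : Perm (Fin 6)) {v : Fin 6 → ℤ} (hv : v ∈ A) :
    pact σ v ∈ A := by
  rw [mem_A] at hv ⊢
  simpa [pact] using (Equiv.sum_comp σ.symm v).trans hv

/-- The restriction of `pact σ` to `A`. -/
def pactA (σ : Perm (Fin 6)) : A ≃+ A where
  toFun w := ⟨pact σ w, pact_mem σ w.2⟩
  invFun w := ⟨pact σ⁻¹ w, pact_mem σ⁻¹ w.2⟩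
  left_inv w := by ext i; simp [pact, Equiv.Perm.inv_def]
  right_inv w := by ext i; simp [pact, Equiv.Perm.inv_def]
  map_add' v w := by ext i; simp [pact]

/-- The action of `S6` on `A` by permuting coordinates: `σ · u_{i,j} = u_{σ(i),σ(j)}`. -/
def φA : Perm (Fin 6) →* MulAut (Multiplicative A) where
  toFun σ := AddEquiv.toMultiplicative (pactA σ)
  map_one' := by ext w; rfl
  map_mul' σ τ := by ext w; rfl

/-- The semidirect product `G = S6 ⋉ ℤ^5`. -/
abbrev G := Multiplicative A ⋊[φA] Perm (Fin 6)

/-- `u_{i,j} := e_i - e_j` in `ℤ^6`, an element of `A`. -/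
def uA (i j : Fin 6) : A :=
  ⟨Pi.single i 1 - Pi.single j 1, by
    rw [mem_A]; simp [Finset.sum_sub_distrib, Pi.single_apply]⟩

/-- The projective relation `P = u_{1,2} u_{2,3}^2 u_{3,4} u_{5,6}⁻¹`
(0-based indices), as an element of `G`. -/
def P : G := inl (Multiplicative.ofAdd (uA 0 1 + 2 • uA 1 2 + uA 2 3 - uA 4 5))

/-- The normal closure `N` of `P` in `G`. -/
def N : Subgroup G := Subgroup.normalClosure {P}

/-! Since `N` is normal, `N ∩ A` is stable under the action of `S6`, and `2 u_{5,6}` is the sum of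
two translates of the relator `P`. Since `S6` is doubly transitive on `{1, …, 6}`, every
`2 u_{i,j}` with `i ≠ j`, in particular every `2 u_{i,i+1}`, is a translate of `2 u_{5,6}`. -/

theorem SemidirectProduct.inl_aut_mem {K H : Type*} [Group K] [Group H] {φ : H →* MulAut K}
    {M : Subgroup (K ⋊[φ] H)} (hM : M.Normal) {n : K} (hn : inl n ∈ M) (h : H) :
    inl (φ h n) ∈ M := by
  rw [inl_aut, map_inv]
  exact hM.conj_mem _ hn _

def NA : AddSubgroup A := Subgroup.toAddSubgroup' (N.comap inl)

lemma mem_NA {a : A} : a ∈ NA ↔ (inl (Multiplicative.ofAdd a) : G) ∈ N := Iff.rfl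

lemma pactA_mem_NA {a : A} (ha : a ∈ NA) (σ : Perm (Fin 6)) : pactA σ a ∈ NA :=
  inl_aut_mem Subgroup.normalClosure_normal ha σ

lemma pactA_uA (σ : Perm (Fin 6)) (i j : Fin 6) : pactA σ (uA i j) = uA (σ i) (σ j) := by
  ext x
  simp [pactA, pact, uA, Pi.single_apply, Equiv.symm_apply_eq]

lemma relator_mem_NA : uA 0 1 + 2 • uA 1 2 + uA 2 3 - uA 4 5 ∈ NA :=
  Subgroup.subset_normalClosure rfl

/- Both permutations swap `4` and `5`, turning `-u_{4,5}` into `u_{4,5}`; the remaining terms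
of the two translates are twice the `u`'s around the cycle `0 → 2 → 1 → 3 → 0` (0-based), which cancel. -/
lemma two_smul_uA_four_five_mem_NA : 2 • uA 4 5 ∈ NA := by
  have hsum : 2 • uA 4 5 =
      pactA (swap 1 2 * swap 4 5) (uA 0 1 + 2 • uA 1 2 + uA 2 3 - uA 4 5) +
      pactA (swap 0 1 * swap 1 3 * swap 3 2 * swap 4 5)
        (uA 0 1 + 2 • uA 1 2 + uA 2 3 - uA 4 5) := by
    apply Subtype.ext; decide
  rw [hsum]
  exact add_mem (pactA_mem_NA relator_mem_NA _) (pactA_mem_NA relator_mem_NA _)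

lemma two_smul_uA_mem_NA {i j : Fin 6} (hij : i ≠ j) : 2 • uA i j ∈ NA := by
  obtain ⟨σ, hσ4, hσ5⟩ := MulAction.is_two_pretransitive_iff.mp
    (Perm.isMultiplyPretransitive (Fin 6) 2) (show (4 : Fin 6) ≠ 5 by decide) hij
  have h := pactA_mem_NA two_smul_uA_four_five_mem_NA σ
  rwa [map_nsmul, pactA_uA, ← Perm.smul_def, ← Perm.smul_def, hσ4, hσ5] at h

/-- For every `0 ≤ k ≤ 4`, the element `u_{5-k,6-k}^2` lies in the normal closure `N`
of `P`; consequently `u_{i,i+1}^2 ∈ N` for all `1 ≤ i ≤ 5` (0-based indices below). -/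
theorem stmt_8 :
    (∀ k : ℕ, k ≤ 4 →
      (inl (Multiplicative.ofAdd (2 • uA ⟨4 - k, by omega⟩ ⟨5 - k, by omega⟩)) : G) ∈ N) ∧
    (∀ i : Fin 5,
      (inl (Multiplicative.ofAdd (2 • uA i.castSucc i.succ)) : G) ∈ N) := by
  refine ⟨fun k hk => mem_NA.mp (two_smul_uA_mem_NA ?_),
    fun i => mem_NA.mp (two_smul_uA_mem_NA Fin.castSucc_lt_succ.ne)⟩
  exact Fin.ne_of_val_ne (by dsimp only; omega)
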